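/- Let Γ be a connected Coxeter graph with canonical root system Φ. If there exist s, t ∈ S with m_{s,t} ≥ 4 (possibly ∞), then the equivalence relation ≡ on Φ generated by α ≡₁ β ⟺ ⟨α,β⟩ ∉ {0,1,-1} has only one equivalence class. -/

import Mathlib

open Real

/-- A Coxeter matrix on the set `S`, with `0` representing the label `∞`. -/
structure CoxeterMat (S : Type*) where
  m : S → S → ℕ
  diagonal : ∀ s, m s s = 1
  symmetric : ∀ s t, m s t = m t s
  off_diagonal : ∀ s t, s ≠ t → m s t ≠ 1

namespace CoxeterMat

variable {S : Type*} (M : CoxeterMat S)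

/-- The coefficient `⟨α_s, α_t⟩ = -2 cos (π / m_{s,t})`, with value `-2` when `m_{s,t} = ∞`. -/
noncomputable def c (s t : S) : ℝ :=
  if M.m s t = 0 then -2 else -2 * Real.cos (Real.pi / (M.m s t : ℝ))

/-- The simple root `α_s` in `V = ⊕_{s ∈ S} ℝ α_s`. -/
noncomputable def sroot (s : S) : S →₀ ℝ := Finsupp.single s 1

/-- The canonical bilinear form of the Coxeter graph. -/
noncomputable def bform : (S →₀ ℝ) →ₗ[ℝ] (S →₀ ℝ) →ₗ[ℝ] ℝ :=
  Finsupp.lift _ ℝ S fun s => Finsupp.lift ℝ ℝ S fun t => M.c s t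

/-- The simple reflection `σ_s : x ↦ x - ⟨α_s, x⟩ α_s`. -/
noncomputable def sigma (s : S) : (S →₀ ℝ) →ₗ[ℝ] (S →₀ ℝ) :=
  LinearMap.id - (M.bform (sroot s)).smulRight (sroot s)

/-- The Coxeter group `W`, realized as the subgroup of linear automorphisms of `V`
generated by the simple reflections. -/
noncomputable def Wgrp : Subgroup ((S →₀ ℝ) ≃ₗ[ℝ] (S →₀ ℝ)) :=
  Subgroup.closure {w | ∃ s : S, (w : (S →₀ ℝ) →ₗ[ℝ] (S →₀ ℝ)) = M.sigma s}

/-- The canonical root system `Φ = {w(α_s) | w ∈ W, s ∈ S}`. -/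
def Phi : Set (S →₀ ℝ) := {b | ∃ w ∈ M.Wgrp, ∃ s : S, b = w (sroot s)}

/-- The set of positive roots. -/
def PhiPos : Set (S →₀ ℝ) := {b | b ∈ M.Phi ∧ ∀ s, 0 ≤ b s}

/-- The equivalence relation `≡` on `Φ` generated by `α ≡₁ β ⟺ ⟨α, β⟩ ∉ {0, 1, -1}`. -/
def equivR : (S →₀ ℝ) → (S →₀ ℝ) → Prop :=
  Relation.EqvGen (fun a b => a ∈ M.Phi ∧ b ∈ M.Phi ∧ M.bform a b ∉ ({0, 1, -1} : Set ℝ))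

/-- The underlying graph of the Coxeter graph: `s` and `t` are joined iff `m_{s,t} ≥ 3`
(including `m_{s,t} = ∞`). -/
def graph : SimpleGraph S where
  Adj s t := s ≠ t ∧ M.m s t ≠ 2
  symm := ⟨fun s t h => ⟨h.1.symm, by rw [M.symmetric]; exact h.2⟩⟩
  loopless := ⟨fun s h => h.1 rfl⟩

/-- The action of a permutation of `S` on `V`. -/
noncomputable def permV (g : Equiv.Perm S) : (S →₀ ℝ) ≃ₗ[ℝ] (S →₀ ℝ) :=
  Finsupp.domLCongr g

/-- The set of elements of `W` fixed by the group `G` of symmetries (acting by conjugation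
by the corresponding permutations of coordinates). -/
noncomputable def WfixG (G : Subgroup (Equiv.Perm S)) :
    Set ((S →₀ ℝ) ≃ₗ[ℝ] (S →₀ ℝ)) :=
  {w | w ∈ M.Wgrp ∧ ∀ g ∈ G, permV g * w = w * permV g}

/-- Construct a simply laced Coxeter matrix from an adjacency relation. -/
noncomputable def ofAdj (A : S → S → Prop) (hs : ∀ s t, A s t → A t s)
    (hi : ∀ s, ¬ A s s) : CoxeterMat S where
  m s t := open Classical in if s = t then 1 else if A s t then 3 else 2
  diagonal s := by simp
  symmetric s t := by
    classical
    by_cases h : s = t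
    · subst h; rfl
    · have h' : t ≠ s := Ne.symm h
      simp only [if_neg h, if_neg h']
      by_cases hA : A s t
      · rw [if_pos hA, if_pos (hs s t hA)]
      · rw [if_neg hA, if_neg (fun h2 => hA (hs t s h2))]
  off_diagonal s t h := by
    classical
    simp only [if_neg h]
    split <;> norm_num

/-- Isomorphism of Coxeter graphs. -/
def Iso {T : Type*} (M : CoxeterMat S) (N : CoxeterMat T) : Prop :=
  ∃ e : S ≃ T, ∀ s t, N.m (e s) (e t) = M.m s t

/-- The full Coxeter subgraph spanned by `Y ⊆ S`. -/
def restrict (Y : Set S) : CoxeterMat Y where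
  m s t := M.m s t
  diagonal s := M.diagonal s
  symmetric s t := M.symmetric s t
  off_diagonal s t h := M.off_diagonal s t (fun hh => h (Subtype.ext hh))

end CoxeterMat

open CoxeterMat

/-- The Coxeter graph `A_n`: a path with `n` vertices. -/
noncomputable def pathA (n : ℕ) : CoxeterMat (Fin n) :=
  ofAdj (fun i j => i.val + 1 = j.val ∨ j.val + 1 = i.val)
    (fun _ _ h => h.symm)
    (fun s h => by rcases h with h | h <;> omega)

/-- The Coxeter graph `D_n`: a path `0 — 1 — ⋯ — (n-2)` together with an extra vertex `n-1`
joined to `n-3`. -/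
noncomputable def Dmat (n : ℕ) : CoxeterMat (Fin n) :=
  ofAdj (fun i j => i ≠ j ∧
      (((i.val + 1 = j.val ∧ j.val ≤ n - 2) ∨ (i.val + 2 = j.val ∧ j.val = n - 1)) ∨
       ((j.val + 1 = i.val ∧ i.val ≤ n - 2) ∨ (j.val + 2 = i.val ∧ i.val = n - 1))))
    (fun _ _ h => ⟨h.1.symm, h.2.symm⟩)
    (fun s h => h.1 rfl)

/-- Adjacency relation determined by a list of edges. -/
def listAdj {n : ℕ} (L : List (Fin n × Fin n)) (i j : Fin n) : Prop :=
  (i, j) ∈ L ∨ (j, i) ∈ L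

instance {n : ℕ} (L : List (Fin n × Fin n)) (i j : Fin n) : Decidable (listAdj L i j) := by
  unfold listAdj; infer_instance

/-- The Coxeter graph `E₆`. -/
noncomputable def E6mat : CoxeterMat (Fin 6) :=
  ofAdj (listAdj [(0,2),(2,3),(3,4),(4,5),(1,3)])
    (fun _ _ h => h.symm) (by decide)

/-- The Coxeter graph `E₇`. -/
noncomputable def E7mat : CoxeterMat (Fin 7) :=
  ofAdj (listAdj [(0,2),(2,3),(3,4),(4,5),(5,6),(1,3)])
    (fun _ _ h => h.symm) (by decide)

/-- The Coxeter graph `E₈`. -/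
noncomputable def E8mat : CoxeterMat (Fin 8) :=
  ofAdj (listAdj [(0,2),(2,3),(3,4),(4,5),(5,6),(6,7),(1,3)])
    (fun _ _ h => h.symm) (by decide)

/-- The Coxeter graph `A_∞`: the one-sided infinite path. -/
noncomputable def Ainf : CoxeterMat ℕ :=
  ofAdj (fun i j => i + 1 = j ∨ j + 1 = i)
    (fun _ _ h => h.symm)
    (fun s h => by omega)

/-- The Coxeter graph `_∞A_∞`: the two-sided infinite path. -/
noncomputable def ZAinf : CoxeterMat ℤ :=
  ofAdj (fun i j => i + 1 = j ∨ j + 1 = i)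
    (fun _ _ h => h.symm)
    (fun s h => by omega)

/-- The Coxeter graph `D_∞`: vertices `0, 1, 2, 3, …` with `0` and `1` joined to `2` and a
path `2 — 3 — 4 — ⋯`. -/
noncomputable def Dinf : CoxeterMat ℕ :=
  ofAdj (fun i j => i ≠ j ∧
      (((i = 0 ∧ j = 2) ∨ (i = 1 ∧ j = 2) ∨ (i + 1 = j ∧ 2 ≤ i)) ∨
       ((j = 0 ∧ i = 2) ∨ (j = 1 ∧ i = 2) ∨ (j + 1 = i ∧ 2 ≤ j))))
    (fun _ _ h => ⟨h.1.symm, h.2.symm⟩)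
    (fun s h => h.1 rfl)

/-- The affine Coxeter graph `Ã_n`: a cycle with `n + 1` vertices. -/
noncomputable def affA (n : ℕ) : CoxeterMat (ZMod (n + 1)) :=
  ofAdj (fun i j => i ≠ j ∧ (i + 1 = j ∨ j + 1 = i))
    (fun _ _ h => ⟨h.1.symm, h.2.symm⟩)
    (fun s h => h.1 rfl)

/-- The affine Coxeter graph `D̃_n` (on `n + 1` vertices, Bourbaki numbering): `0` and `1`
joined to `2`, a path `2 — 3 — ⋯ — (n-1)`, and `n` joined to `n-2`. -/
noncomputable def affD (n : ℕ) : CoxeterMat (Fin (n + 1)) :=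
  ofAdj (fun i j => i ≠ j ∧
      (((i.val = 0 ∧ j.val = 2) ∨ (i.val = 1 ∧ j.val = 2) ∨
        (i.val + 1 = j.val ∧ 2 ≤ i.val ∧ i.val ≤ n - 2) ∨
        (i.val = n - 2 ∧ j.val = n)) ∨
       ((j.val = 0 ∧ i.val = 2) ∨ (j.val = 1 ∧ i.val = 2) ∨
        (j.val + 1 = i.val ∧ 2 ≤ j.val ∧ j.val ≤ n - 2) ∨
        (j.val = n - 2 ∧ i.val = n))))
    (fun _ _ h => ⟨h.1.symm, h.2.symm⟩)
    (fun s h => h.1 rfl)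

/-- The affine Coxeter graph `Ẽ₆` (Bourbaki numbering, affine vertex `0`). -/
noncomputable def affE6 : CoxeterMat (Fin 7) :=
  ofAdj (listAdj [(1,3),(3,4),(4,5),(5,6),(2,4),(0,2)])
    (fun _ _ h => h.symm) (by decide)

/-- The affine Coxeter graph `Ẽ₇` (Bourbaki numbering, affine vertex `0`). -/
noncomputable def affE7 : CoxeterMat (Fin 8) :=
  ofAdj (listAdj [(0,1),(1,3),(3,4),(4,5),(5,6),(6,7),(2,4)])
    (fun _ _ h => h.symm) (by decide)

/-- The affine Coxeter graph `Ẽ₈` (Bourbaki numbering, affine vertex `0`). -/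
noncomputable def affE8 : CoxeterMat (Fin 9) :=
  ofAdj (listAdj [(1,3),(3,4),(4,5),(5,6),(6,7),(7,8),(2,4),(0,8)])
    (fun _ _ h => h.symm) (by decide)

/-! Write `c s t = ⟨α_s, α_t⟩`; the hypothesis `m_{s,t} ≥ 4` means `c s t < -1`, and two roots
whose pairing has absolute value `> 1` are equivalent. The root `σ_s α_t = α_t - (c s t) α_s` is
nonnegative with coefficient `> 1` at `s`. Walking along a path away from `s` (and avoiding `t`),
a nonnegative root `γ` with coefficient `> 1` at a neighbour of the next vertex `v` and vanishing
on the rest of the path has `⟨α_v, γ⟩ < -1`, so `α_v ≡ γ ≡ σ_v γ`, and `σ_v γ` has coefficient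
`> 1` at `v`. By connectedness all simple roots are therefore equivalent. Their class is stable
under `W`, which preserves the form: `σ_r α_s ≡ σ_r α_r = -α_r ≡ α_r`. Every root `w α_u` is
then equivalent to `w α_s ≡ α_s`. -/

namespace CoxeterMat

variable {S : Type*} (M : CoxeterMat S)

lemma c_symm (s t : S) : M.c s t = M.c t s := by
  rw [c, c, M.symmetric]

lemma c_self (s : S) : M.c s s = 2 := by
  simp [c, M.diagonal]

lemma c_le_neg_two_mul_cos {s t : S} {k : ℕ} (hk : 0 < k) (h : M.m s t = 0 ∨ k ≤ M.m s t) :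
    M.c s t ≤ -2 * cos (π / k) := by
  unfold c
  split_ifs with h0
  · linarith [cos_le_one (π / k)]
  · have hk' : (1 : ℝ) ≤ k := by exact_mod_cast hk
    have hkm : (k : ℝ) ≤ M.m s t := by exact_mod_cast h.resolve_left h0
    have := cos_le_cos_of_nonneg_of_le_pi (by positivity) (div_le_self pi_pos.le hk')
      (div_le_div_of_nonneg_left pi_pos.le (by positivity) hkm)
    linarith

lemma c_nonpos {s t : S} (hst : s ≠ t) : M.c s t ≤ 0 := by
  have h : M.m s t = 0 ∨ 2 ≤ M.m s t := by have := M.off_diagonal s t hst; omega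
  simpa using M.c_le_neg_two_mul_cos two_pos h

lemma c_le_neg_one {s t : S} (hst : M.graph.Adj s t) : M.c s t ≤ -1 := by
  have h : M.m s t = 0 ∨ 3 ≤ M.m s t := by
    have := M.off_diagonal s t hst.1; have := hst.2; omega
  have := M.c_le_neg_two_mul_cos three_pos h
  norm_num at this
  linarith

lemma c_lt_neg_one {s t : S} (h : M.m s t = 0 ∨ 4 ≤ M.m s t) : M.c s t < -1 := by
  have := M.c_le_neg_two_mul_cos four_pos h
  norm_num at this
  linarith [one_lt_sqrt_two]

lemma bform_single_single (s t : S) (a b : ℝ) :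
    M.bform (Finsupp.single s a) (Finsupp.single t b) = a * b * M.c s t := by
  simp [bform, mul_assoc]

lemma bform_sroot_sroot (s t : S) : M.bform (sroot s) (sroot t) = M.c s t := by
  simp [sroot, bform_single_single]

lemma bform_symm (x y : S →₀ ℝ) : M.bform x y = M.bform y x := by
  induction x using Finsupp.induction_linear with
  | zero => simp
  | add x x' hx hx' => simp [hx, hx']
  | single s a =>
    induction y using Finsupp.induction_linear with
    | zero => simp
    | add y y' hy hy' => simp [hy, hy']
    | single t b => rw [bform_single_single, bform_single_single, c_symm]; ring

lemma bform_sroot_eq_sum (v : S) (γ : S →₀ ℝ) :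
    M.bform (sroot v) γ = ∑ x ∈ γ.support, γ x * M.c v x := by
  simp [bform, sroot, Finsupp.sum]

lemma sigma_apply (r : S) (x : S →₀ ℝ) :
    M.sigma r x = x - M.bform (sroot r) x • sroot r := rfl

lemma sigma_apply_self (v : S) (γ : S →₀ ℝ) :
    M.sigma v γ v = γ v - M.bform (sroot v) γ := by
  simp [sigma_apply, sroot]

lemma sigma_apply_of_ne {v x : S} (γ : S →₀ ℝ) (hx : x ≠ v) : M.sigma v γ x = γ x := by
  simp [sigma_apply, sroot, Finsupp.single_eq_of_ne' hx.symm]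

lemma sigma_sroot_self (r : S) : M.sigma r (sroot r) = -sroot r := by
  rw [sigma_apply, bform_sroot_sroot, c_self]
  module

lemma bform_sroot_sigma (r : S) (x : S →₀ ℝ) :
    M.bform (sroot r) (M.sigma r x) = -M.bform (sroot r) x := by
  rw [sigma_apply, map_sub, map_smul, smul_eq_mul, bform_sroot_sroot, c_self]
  ring

lemma bform_sigma_sigma (r : S) (x y : S →₀ ℝ) :
    M.bform (M.sigma r x) (M.sigma r y) = M.bform x y := by
  simp only [sigma_apply, map_sub, map_smul, LinearMap.sub_apply, LinearMap.smul_apply,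
    smul_eq_mul, bform_sroot_sroot, c_self, M.bform_symm x (sroot r)]
  ring

lemma sigma_involutive (r : S) : Function.Involutive (M.sigma r) := fun x => by
  rw [sigma_apply (x := M.sigma r x), bform_sroot_sigma, sigma_apply]
  module

noncomputable def sigmaEquiv (r : S) : (S →₀ ℝ) ≃ₗ[ℝ] (S →₀ ℝ) :=
  LinearEquiv.ofInvolutive (M.sigma r) (M.sigma_involutive r)

lemma sigmaEquiv_mem_Wgrp (r : S) : M.sigmaEquiv r ∈ M.Wgrp :=
  Subgroup.subset_closure ⟨r, rfl⟩

lemma sigmaEquiv_inv (r : S) : (M.sigmaEquiv r)⁻¹ = M.sigmaEquiv r :=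
  inv_eq_of_mul_eq_one_right (LinearEquiv.ext (M.sigma_involutive r))

/-- Since the generators are involutions, `W` is generated by them as a monoid. -/
@[elab_as_elim]
lemma Wgrp_induction {p : ((S →₀ ℝ) ≃ₗ[ℝ] (S →₀ ℝ)) → Prop} (one : p 1)
    (sigma_mul : ∀ r w, p w → p (M.sigmaEquiv r * w)) {w : (S →₀ ℝ) ≃ₗ[ℝ] (S →₀ ℝ)}
    (hw : w ∈ M.Wgrp) : p w := by
  have eq_sigmaEquiv (g : (S →₀ ℝ) ≃ₗ[ℝ] (S →₀ ℝ))
      (hg : ∃ s : S, (g : (S →₀ ℝ) →ₗ[ℝ] (S →₀ ℝ)) = M.sigma s) : ∃ r, g = M.sigmaEquiv r :=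
    hg.imp fun _ hr => LinearEquiv.toLinearMap_injective hr
  refine Subgroup.closure_induction_left (p := fun w _ => p w) one ?_ ?_ hw
  · intro g hg w _ hw
    obtain ⟨r, rfl⟩ := eq_sigmaEquiv g hg
    exact sigma_mul r w hw
  · intro g hg w _ hw
    obtain ⟨r, rfl⟩ := eq_sigmaEquiv g hg
    rw [sigmaEquiv_inv]
    exact sigma_mul r w hw

lemma bform_apply_apply_of_mem_Wgrp {w : (S →₀ ℝ) ≃ₗ[ℝ] (S →₀ ℝ)} (hw : w ∈ M.Wgrp)
    (x y : S →₀ ℝ) : M.bform (w x) (w y) = M.bform x y := by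
  revert x y
  exact M.Wgrp_induction (fun _ _ => rfl)
    (fun r w ih x y => (M.bform_sigma_sigma r (w x) (w y)).trans (ih x y)) hw

lemma sroot_mem_Phi (u : S) : sroot u ∈ M.Phi :=
  ⟨1, one_mem _, u, rfl⟩

lemma apply_mem_Phi {w : (S →₀ ℝ) ≃ₗ[ℝ] (S →₀ ℝ)} (hw : w ∈ M.Wgrp) {b : S →₀ ℝ}
    (hb : b ∈ M.Phi) : w b ∈ M.Phi := by
  obtain ⟨w', hw', u, rfl⟩ := hb
  exact ⟨w * w', mul_mem hw hw', u, rfl⟩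

lemma sigma_mem_Phi (r : S) {b : S →₀ ℝ} (hb : b ∈ M.Phi) : M.sigma r b ∈ M.Phi :=
  M.apply_mem_Phi (M.sigmaEquiv_mem_Wgrp r) hb

lemma equivR.refl (a : S →₀ ℝ) : M.equivR a a := Relation.EqvGen.refl a

section
variable {M}

lemma equivR.symm {a b : S →₀ ℝ} (h : M.equivR a b) : M.equivR b a :=
  Relation.EqvGen.symm a b h

lemma equivR.trans {a b c : S →₀ ℝ} (h : M.equivR a b) (h' : M.equivR b c) : M.equivR a c :=
  Relation.EqvGen.trans a b c h h'

lemma equivR_of_one_lt_abs {a b : S →₀ ℝ} (ha : a ∈ M.Phi) (hb : b ∈ M.Phi)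
    (h : 1 < |M.bform a b|) : M.equivR a b := by
  refine Relation.EqvGen.rel a b ⟨ha, hb, ?_⟩
  rintro (h' | h' | h') <;> rw [h'] at h <;> norm_num at h

lemma equivR.apply {w : (S →₀ ℝ) ≃ₗ[ℝ] (S →₀ ℝ)} (hw : w ∈ M.Wgrp) {a b : S →₀ ℝ}
    (h : M.equivR a b) : M.equivR (w a) (w b) := by
  induction h with
  | rel a b hab =>
    refine Relation.EqvGen.rel _ _ ⟨M.apply_mem_Phi hw hab.1, M.apply_mem_Phi hw hab.2.1, ?_⟩
    rw [M.bform_apply_apply_of_mem_Wgrp hw]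
    exact hab.2.2
  | refl a => exact equivR.refl M _
  | symm a b _ ih => exact ih.symm
  | trans a b c _ _ ih ih' => exact ih.trans ih'

end

lemma bform_sroot_lt_neg_one {v w : S} {γ : S →₀ ℝ} (hpos : ∀ x, 0 ≤ γ x) (hv : γ v = 0)
    (hvw : M.graph.Adj v w) (hw : 1 < γ w) : M.bform (sroot v) γ < -1 := by
  have hw_mem : w ∈ γ.support := Finsupp.mem_support_iff.2 (by linarith)
  have hterm_nonpos (x : S) : γ x * M.c v x ≤ 0 := by
    rcases eq_or_ne x v with rfl | hxv
    · simp [hv]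
    · exact mul_nonpos_of_nonneg_of_nonpos (hpos x) (M.c_nonpos hxv.symm)
  calc M.bform (sroot v) γ = ∑ x ∈ γ.support, γ x * M.c v x := M.bform_sroot_eq_sum v γ
    _ ≤ ∑ x ∈ {w}, γ x * M.c v x :=
      Finset.sum_le_sum_of_subset_of_nonpos' (by simpa using hw_mem)
        fun x _ _ => hterm_nonpos x
    _ ≤ -γ w := by simpa using mul_le_mul_of_nonneg_left (M.c_le_neg_one hvw) (hpos w)
    _ < -1 := by linarith

lemma equivR_sroot_of_isPath {w v u : S} (hwv : M.graph.Adj w v) (p : M.graph.Walk v u)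
    (hp : p.IsPath) {γ : S →₀ ℝ} (hγ : γ ∈ M.Phi) (hpos : ∀ x, 0 ≤ γ x) (hw : 1 < γ w)
    (hzero : ∀ x ∈ p.support, γ x = 0) : M.equivR (sroot u) γ := by
  induction p generalizing w γ with
  | nil =>
    refine M.equivR_of_one_lt_abs (M.sroot_mem_Phi _) hγ ?_
    have := M.bform_sroot_lt_neg_one hpos (hzero _ (by simp)) hwv.symm hw
    rw [lt_abs]; right; linarith
  | @cons v v' u hvv' q ih =>
    rw [SimpleGraph.Walk.cons_isPath_iff] at hp
    have hγv : γ v = 0 := hzero v (by simp)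
    have hneg := M.bform_sroot_lt_neg_one hpos hγv hwv.symm hw
    have hσv : M.sigma v γ v = -M.bform (sroot v) γ := by rw [sigma_apply_self, hγv, zero_sub]
    have hσ_ne {x : S} (hx : x ≠ v) : M.sigma v γ x = γ x := M.sigma_apply_of_ne γ hx
    have hσpos (x : S) : 0 ≤ M.sigma v γ x := by
      rcases eq_or_ne x v with rfl | hx
      · rw [hσv]; linarith
      · rw [hσ_ne hx]; exact hpos x
    have hσzero : ∀ x ∈ q.support, M.sigma v γ x = 0 := fun x hx => by
      rw [hσ_ne (by rintro rfl; exact hp.2 hx)]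
      exact hzero x (by simp [hx])
    have huσ := ih hvv' hp.1 (M.sigma_mem_Phi v hγ) hσpos (by rw [hσv]; linarith) hσzero
    have hσv_equiv : M.equivR (M.sigma v γ) (sroot v) :=
      M.equivR_of_one_lt_abs (M.sigma_mem_Phi v hγ) (M.sroot_mem_Phi v) (by
        rw [bform_symm, bform_sroot_sigma, abs_neg, lt_abs]; right; linarith)
    have hvγ : M.equivR (sroot v) γ :=
      M.equivR_of_one_lt_abs (M.sroot_mem_Phi v) hγ (by rw [lt_abs]; right; linarith)
    exact huσ.trans (hσv_equiv.trans hvγ)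

lemma equivR_sroot_of_isPath_of_notMem {s t u : S} (hst : M.c s t < -1)
    (p : M.graph.Walk s u) (hp : p.IsPath) (ht : t ∉ p.support) :
    M.equivR (sroot u) (sroot s) := by
  cases p with
  | nil => exact equivR.refl M _
  | @cons _ v _ hsv q =>
    rw [SimpleGraph.Walk.cons_isPath_iff] at hp
    have hs : M.sigma s (sroot t) s = -M.c s t := by
      have hts : t ≠ s := by rintro rfl; simp at ht
      rw [sigma_apply_self, bform_sroot_sroot, sroot, Finsupp.single_eq_of_ne hts.symm, zero_sub]
    have hne {x : S} (hx : x ≠ s) : M.sigma s (sroot t) x = sroot t x :=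
      M.sigma_apply_of_ne _ hx
    have hpos (x : S) : 0 ≤ M.sigma s (sroot t) x := by
      rcases eq_or_ne x s with rfl | hx
      · rw [hs]; linarith
      · rw [hne hx]; exact Finsupp.single_nonneg.2 zero_le_one x
    have hzero : ∀ x ∈ q.support, M.sigma s (sroot t) x = 0 := fun x hx => by
      have hxt : t ≠ x := by rintro rfl; simp [hx] at ht
      rw [hne (by rintro rfl; exact hp.2 hx), sroot, Finsupp.single_eq_of_ne hxt.symm]
    have hγs : M.equivR (M.sigma s (sroot t)) (sroot s) :=
      M.equivR_of_one_lt_abs (M.sigma_mem_Phi s (M.sroot_mem_Phi t)) (M.sroot_mem_Phi s) (by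
        rw [bform_symm, bform_sroot_sigma, bform_sroot_sroot, abs_neg, lt_abs]; right; linarith)
    exact (M.equivR_sroot_of_isPath hsv q hp.1 (M.sigma_mem_Phi s (M.sroot_mem_Phi t)) hpos
      (by rw [hs]; linarith) hzero).trans hγs

lemma equivR_sroot_sroot (hconn : M.graph.Connected) {s t : S} (hst : M.c s t < -1) (u : S) :
    M.equivR (sroot u) (sroot s) := by
  classical
  let p := (hconn.preconnected u s).some.toPath
  by_cases ht : t ∈ p.1.support
  · have hts : M.c t s < -1 := by rwa [c_symm]
    have hs_ne_t : s ≠ t := by rintro rfl; linarith [M.c_self s]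
    have hs : s ∉ (p.1.takeUntil t ht).support :=
      SimpleGraph.Walk.endpoint_notMem_support_takeUntil p.2 ht hs_ne_t
    have hut := M.equivR_sroot_of_isPath_of_notMem hts (p.1.takeUntil t ht).reverse
      (p.2.takeUntil ht).reverse (by simpa using hs)
    exact hut.trans (M.equivR_of_one_lt_abs (M.sroot_mem_Phi t) (M.sroot_mem_Phi s) (by
      rw [bform_sroot_sroot, lt_abs]; right; linarith))
  · exact M.equivR_sroot_of_isPath_of_notMem hst p.1.reverse p.2.reverse (by simpa using ht)

lemma equivR_apply_sroot {s : S} (hsimple : ∀ u, M.equivR (sroot u) (sroot s))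
    {w : (S →₀ ℝ) ≃ₗ[ℝ] (S →₀ ℝ)} (hw : w ∈ M.Wgrp) : M.equivR (w (sroot s)) (sroot s) := by
  refine M.Wgrp_induction (equivR.refl M _) (fun r w ih => ?_) hw
  have hneg : M.equivR (-sroot r) (sroot r) := by
    rw [← sigma_sroot_self]
    refine M.equivR_of_one_lt_abs (M.sigma_mem_Phi r (M.sroot_mem_Phi r)) (M.sroot_mem_Phi r) ?_
    rw [bform_symm, bform_sroot_sigma, bform_sroot_sroot, c_self]
    norm_num
  have hσ : M.equivR (M.sigma r (w (sroot s))) (M.sigma r (sroot r)) :=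
    (ih.trans (hsimple r).symm).apply (M.sigmaEquiv_mem_Wgrp r)
  rw [sigma_sroot_self] at hσ
  exact hσ.trans (hneg.trans (hsimple r))

lemma equivR_sroot_of_mem_Phi {s : S} (hsimple : ∀ u, M.equivR (sroot u) (sroot s))
    {a : S →₀ ℝ} (ha : a ∈ M.Phi) : M.equivR a (sroot s) := by
  obtain ⟨w, hw, u, rfl⟩ := ha
  exact ((hsimple u).apply hw).trans (M.equivR_apply_sroot hsimple hw)

end CoxeterMat

/-- If a connected Coxeter graph has two vertices `s, t` with `m_{s,t} ≥ 4` (possibly `∞`),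
then the equivalence relation `≡` on `Φ` has only one equivalence class. -/
theorem stmt7 {S : Type*} (M : CoxeterMat S) (hconn : M.graph.Connected)
    (s t : S) (h : M.m s t = 0 ∨ 4 ≤ M.m s t) :
    ∀ a ∈ M.Phi, ∀ b ∈ M.Phi, M.equivR a b := by
  have hsimple := M.equivR_sroot_sroot hconn (M.c_lt_neg_one h)
  intro a ha b hb
  exact (M.equivR_sroot_of_mem_Phi hsimple ha).trans (M.equivR_sroot_of_mem_Phi hsimple hb).symm
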